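/- Let X be a real Banach space, let H₀, H₁, H₂ be real Hilbert spaces, and let T : X → H₀, A : X → H₁, B : X → H₂ be bounded linear operators such that √2 · ‖Tx‖ ≤ ‖Ax‖ + ‖Bx‖ for all x ∈ X. If A and B are 1-summing, then T is 1-summing with π₁(T) ≤ (π₁(A) + π₁(B)) / √2. -/
import Mathlib


noncomputable section

/-- The set of admissible 1-summing constants of a bounded operator `T : X → Y`. -/
def oneSummingConstSet {X Y : Type*} [NormedAddCommGroup X] [NormedSpace ℝ X]
    [NormedAddCommGroup Y] [NormedSpace ℝ Y] (T : X →L[ℝ] Y) : Set ℝ :=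
  {C : ℝ | 0 ≤ C ∧ ∀ (n : ℕ) (x : Fin n → X),
    ∑ k, ‖T (x k)‖ ≤ C * ⨆ ξ : {ξ : X →L[ℝ] ℝ // ‖ξ‖ ≤ 1}, ∑ k, |ξ.1 (x k)|}

/-- A bounded operator `T : X → Y` is 1-summing (absolutely summing). -/
def OneSumming {X Y : Type*} [NormedAddCommGroup X] [NormedSpace ℝ X]
    [NormedAddCommGroup Y] [NormedSpace ℝ Y] (T : X →L[ℝ] Y) : Prop :=
  (oneSummingConstSet T).Nonempty

/-- The 1-summing norm `π₁(T)`: the least admissible 1-summing constant. -/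
def pi1 {X Y : Type*} [NormedAddCommGroup X] [NormedSpace ℝ X]
    [NormedAddCommGroup Y] [NormedSpace ℝ Y] (T : X →L[ℝ] Y) : ℝ :=
  sInf (oneSummingConstSet T)

/-- If `√2 ‖T x‖ ≤ ‖A x‖ + ‖B x‖` for all `x`, with `A`, `B` 1-summing operators into
Hilbert spaces, then `T` is 1-summing with `π₁(T) ≤ (π₁(A) + π₁(B)) / √2`. -/
theorem oneSumming_of_sqrt_two_bound (X : Type*) [NormedAddCommGroup X] [NormedSpace ℝ X]
    [CompleteSpace X]
    (H₀ H₁ H₂ : Type*)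
    [NormedAddCommGroup H₀] [InnerProductSpace ℝ H₀] [CompleteSpace H₀]
    [NormedAddCommGroup H₁] [InnerProductSpace ℝ H₁] [CompleteSpace H₁]
    [NormedAddCommGroup H₂] [InnerProductSpace ℝ H₂] [CompleteSpace H₂]
    (T : X →L[ℝ] H₀) (A : X →L[ℝ] H₁) (B : X →L[ℝ] H₂)
    (hbound : ∀ x : X, Real.sqrt 2 * ‖T x‖ ≤ ‖A x‖ + ‖B x‖)
    (hA : OneSumming A) (hB : OneSumming B) :
    OneSumming T ∧ pi1 T ≤ (pi1 A + pi1 B) / Real.sqrt 2 := by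
  obtain ⟨Ca, hCa⟩ := hA
  obtain ⟨Cb, hCb⟩ := hB
  have h2 : (0:ℝ) < Real.sqrt 2 := by positivity
  have key : ∀ Ca' ∈ oneSummingConstSet A, ∀ Cb' ∈ oneSummingConstSet B,
      (Ca' + Cb') / Real.sqrt 2 ∈ oneSummingConstSet T := by
    rintro Ca' ⟨hCa'0, hCa'⟩ Cb' ⟨hCb'0, hCb'⟩
    refine ⟨by positivity, fun n x => ?_⟩
    set S := ⨆ ξ : {ξ : X →L[ℝ] ℝ // ‖ξ‖ ≤ 1}, ∑ k, |ξ.1 (x k)| with hS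
    have h1 : Real.sqrt 2 * ∑ k, ‖T (x k)‖ ≤ (Ca' + Cb') * S := by
      rw [Finset.mul_sum]
      calc ∑ k, Real.sqrt 2 * ‖T (x k)‖ ≤ ∑ k, (‖A (x k)‖ + ‖B (x k)‖) :=
            Finset.sum_le_sum fun k _ => hbound (x k)
        _ = (∑ k, ‖A (x k)‖) + ∑ k, ‖B (x k)‖ := Finset.sum_add_distrib
        _ ≤ Ca' * S + Cb' * S := add_le_add (hCa' n x) (hCb' n x)
        _ = (Ca' + Cb') * S := by ring
    rw [div_mul_eq_mul_div, le_div_iff₀ h2, mul_comm]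
    exact h1
  have hAne : (oneSummingConstSet A).Nonempty := ⟨Ca, hCa⟩
  have hBne : (oneSummingConstSet B).Nonempty := ⟨Cb, hCb⟩
  have hbdd : BddBelow (oneSummingConstSet T) := ⟨0, fun c hc => hc.1⟩
  refine ⟨⟨_, key Ca hCa Cb hCb⟩, ?_⟩
  have step : ∀ Ca' ∈ oneSummingConstSet A,
      pi1 T ≤ (Ca' + pi1 B) / Real.sqrt 2 := by
    intro Ca' hCa'
    rw [le_div_iff₀ h2]
    have : pi1 T * Real.sqrt 2 - Ca' ≤ pi1 B := by
      refine le_csInf hBne fun Cb' hCb' => ?_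
      have h3 : pi1 T ≤ (Ca' + Cb') / Real.sqrt 2 := csInf_le hbdd (key Ca' hCa' Cb' hCb')
      rw [le_div_iff₀ h2] at h3
      linarith
    linarith
  rw [le_div_iff₀ h2]
  have : pi1 T * Real.sqrt 2 - pi1 B ≤ pi1 A := by
    refine le_csInf hAne fun Ca' hCa' => ?_
    have h3 := step Ca' hCa'
    rw [le_div_iff₀ h2] at h3
    linarith
  linarith
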